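/- arXiv:2411.09314 — 4 statements merged into one kernel-verified Lean document; each statement's English description precedes it below -/
import Mathlib

section
/- For the D2Q9 athermal fluid model, the third-order matrix N_3 (with entries involving f_1(θ)=sin(4θ) and f_2(θ)=sin^2(2θ)) becomes independent of the angle θ if and only if the coefficients g_1 = (1 - 6σ_6(σ_3+σ_4))/24, g_2 = (1 - 12σ_4σ_6)/24, and g_3 = (1 + 12σ_6(σ_3 - 2σ_4))/24 all vanish; and these three coefficients vanish simultaneously if and only if σ_3 = σ_4 and σ_4 σ_6 = 1/12 (assuming σ_6 ≠ 0). -/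
open Real

/-- The angle-dependent third-order matrix `N₃` of the D2Q9 athermal fluid model
(without the overall factor `k³`), with `f₁(θ) = sin 4θ` and `f₂(θ) = sin² 2θ`. -/
noncomputable def N3 (σ3 σ4 σ6 V : ℝ) (θ : ℝ) : Matrix (Fin 3) (Fin 3) ℝ :=
  let f1 := Real.sin (4 * θ)
  let f2 := (Real.sin (2 * θ)) ^ 2
  let h0 := (1 - 3 * (σ3 ^ 2 + σ4 ^ 2)) / 27
  let h1 := (σ3 + 3 * σ4 - 2 * σ6) * (σ3 - σ4) / 6
  let h3 := (σ4 - 2 * σ6) * (σ3 - σ4) / 3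
  let h4 := (1 + 6 * σ4 * (σ3 + σ4 - 2 * σ6)) / 18
  let g1 := (1 - 6 * σ6 * (σ3 + σ4)) / 24
  let g2 := (1 - 12 * σ4 * σ6) / 24
  let g3 := (1 + 12 * σ6 * (σ3 - 2 * σ4)) / 24
  !![0, -1 / 18, 0;
     h0 + h1 * V ^ 2, g1 * f1, h3 * V - g3 * V * f2;
     g2 * V ^ 2 * f1, h4 * V - g2 * V ^ 2 * f1, g2 * V * f1]

/-- The matrix `N₃` is independent of the angle `θ` iff the coefficients
`g₁ = (1 - 6σ₆(σ₃+σ₄))/24`, `g₂ = (1 - 12σ₄σ₆)/24`, `g₃ = (1 + 12σ₆(σ₃-2σ₄))/24`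
all vanish; and (for `σ₆ ≠ 0`) these vanish simultaneously iff
`σ₃ = σ₄` and `σ₄ σ₆ = 1/12`. -/
theorem d2q9_N3_isotropy (σ3 σ4 σ6 V : ℝ) (hσ6 : σ6 ≠ 0) (hV : V ≠ 0) :
    ((∀ θ : ℝ, N3 σ3 σ4 σ6 V θ = N3 σ3 σ4 σ6 V 0) ↔
      ((1 - 6 * σ6 * (σ3 + σ4)) / 24 = 0 ∧
       (1 - 12 * σ4 * σ6) / 24 = 0 ∧
       (1 + 12 * σ6 * (σ3 - 2 * σ4)) / 24 = 0)) ∧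
    (((1 - 6 * σ6 * (σ3 + σ4)) / 24 = 0 ∧
      (1 - 12 * σ4 * σ6) / 24 = 0 ∧
      (1 + 12 * σ6 * (σ3 - 2 * σ4)) / 24 = 0) ↔
      (σ3 = σ4 ∧ σ4 * σ6 = 1 / 12)) := by
  constructor
  · constructor
    · intro h
      have h8 := h (π / 8)
      have s4 : Real.sin (4 * (π / 8)) = 1 := by
        rw [show 4 * (π / 8) = π / 2 by ring]; exact Real.sin_pi_div_two
      have s2 : (Real.sin (2 * (π / 8))) ^ 2 = 1 / 2 := by
        rw [show 2 * (π / 8) = π / 4 by ring, Real.sin_pi_div_four]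
        rw [div_pow, Real.sq_sqrt (by norm_num)]; norm_num
      simp only [N3, s4, s2, mul_zero, Real.sin_zero] at h8
      have e11 := congrFun (congrFun h8 1) 1
      have e22 := congrFun (congrFun h8 2) 2
      have e12 := congrFun (congrFun h8 1) 2
      simp [Matrix.cons_val_one, Matrix.head_cons, Matrix.cons_val_zero] at e11 e22 e12
      have n2 : 1 - 12 * σ4 * σ6 = 0 := by
        rcases e22 with h' | h'
        · exact h'
        · exact absurd h' hV
      have n3 : 1 + 12 * σ6 * (σ3 - 2 * σ4) = 0 := by
        rcases e12 with h' | h'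
        · exact h'
        · exact absurd h' hV
      exact ⟨by linarith, by linarith, by linarith⟩
    · rintro ⟨g1, g2, g3⟩
      intro θ
      simp only [N3, g1, g2, g3]
      norm_num
  · constructor
    · rintro ⟨g1, g2, g3⟩
      have h1 : 6 * σ6 * (σ3 + σ4) = 1 := by linarith [(div_eq_zero_iff.mp g1).resolve_right (by norm_num)]
      have h2 : 12 * σ4 * σ6 = 1 := by linarith [(div_eq_zero_iff.mp g2).resolve_right (by norm_num)]
      have h46 : σ4 * σ6 = 1 / 12 := by linarith
      have h36 : σ3 * σ6 = 1 / 12 := by nlinarith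
      exact ⟨mul_right_cancel₀ hσ6 (by linarith), h46⟩
    · rintro ⟨h34, h46⟩
      subst h34
      refine ⟨by nlinarith, by nlinarith, by nlinarith⟩
end

section
/- For the D2Q9 model, the third-order phase velocity correction for a transverse wave with velocity perpendicular to the wave vector, v_φ = (1/24)V(1 - 12σ_4σ_6)sin(4θ), vanishes for all angles θ and all speeds V if and only if σ_4 σ_6 = 1/12. -/
/-- For the D2Q9 model, the third-order phase velocity correction for a
transverse wave with `V ⊥ k`, `v_φ = (1/24) V (1 - 12 σ₄ σ₆) sin 4θ`,
vanishes for all angles `θ` and all speeds `V` iff `σ₄ σ₆ = 1/12`. -/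
theorem d2q9_transverse_phase_velocity_vanishes_iff (σ4 σ6 : ℝ) :
    (∀ θ V : ℝ, (1 / 24) * V * (1 - 12 * σ4 * σ6) * Real.sin (4 * θ) = 0)
      ↔ σ4 * σ6 = 1 / 12 := by
  constructor
  · intro h
    have := h (Real.pi / 8) 1
    rw [show 4 * (Real.pi / 8) = Real.pi / 2 by ring, Real.sin_pi_div_two] at this
    nlinarith [this]
  · intro h θ V
    rw [show (12 : ℝ) * σ4 * σ6 = 12 * (σ4 * σ6) by ring, h]
    ring
end

section
/- For the D2Q9 model with σ_4σ_6 = 1/12, the third-order phase velocity correction for a transverse wave with V parallel to k, namely (1/24)[16σ_4(σ_4 - σ_6) + (1 - 12σ_4σ_6)f_2(θ)]V, is independent of θ and vanishes if and only if σ_4 = σ_6, which together with σ_4σ_6 = 1/12 forces σ_4 = σ_6 = 1/√12. -/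
/-- For the D2Q9 model with `σ₄ σ₆ = 1/12`, the third-order phase velocity
correction for a transverse wave with `V ∥ k`, namely
`(1/24)[16 σ₄ (σ₄ - σ₆) + (1 - 12 σ₄ σ₆) sin²(2θ)] V`, is independent of `θ`,
and it vanishes for all `V` iff `σ₄ = σ₆`; moreover together with
`σ₄ σ₆ = 1/12` this forces `σ₄ = σ₆ = 1/√12`. -/
theorem d2q9_parallel_phase_velocity (σ4 σ6 : ℝ)
    (hσ4 : 0 < σ4) (hσ6 : 0 < σ6) (h : σ4 * σ6 = 1 / 12) :
    (∀ θ V : ℝ,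
      (1 / 24) * (16 * σ4 * (σ4 - σ6) + (1 - 12 * σ4 * σ6) * (Real.sin (2 * θ)) ^ 2) * V
        = (1 / 24) * (16 * σ4 * (σ4 - σ6)
            + (1 - 12 * σ4 * σ6) * (Real.sin (2 * 0)) ^ 2) * V) ∧
    ((∀ θ V : ℝ,
        (1 / 24) * (16 * σ4 * (σ4 - σ6)
          + (1 - 12 * σ4 * σ6) * (Real.sin (2 * θ)) ^ 2) * V = 0)
      ↔ σ4 = σ6) ∧
    (σ4 = σ6 → σ4 = 1 / Real.sqrt 12 ∧ σ6 = 1 / Real.sqrt 12) := by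
  have hc : (1 : ℝ) - 12 * (σ4 * σ6) = 0 := by rw [h]; ring
  refine ⟨?_, ?_, ?_⟩
  · intro θ V
    have : (1 : ℝ) - 12 * σ4 * σ6 = 0 := by linarith [hc]
    rw [this]; ring
  · constructor
    · intro hall
      have := hall 0 1
      simp at this
      rcases this with h1 | h1
      · exact absurd h1 (ne_of_gt hσ4)
      · linarith
    · intro he θ V
      subst he
      rw [show (1 : ℝ) - 12 * σ4 * σ4 = 0 from by nlinarith]; ring
  · intro he
    subst he
    have h12 : (0:ℝ) < 12 := by norm_num
    have hs : Real.sqrt 12 > 0 := Real.sqrt_pos.mpr h12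
    have hsq : σ4 ^ 2 = 1 / 12 := by nlinarith
    have : σ4 = 1 / Real.sqrt 12 := by
      have h2 : (1 / Real.sqrt 12) ^ 2 = 1 / 12 := by
        rw [div_pow, one_pow, Real.sq_sqrt (by norm_num : (12:ℝ) ≥ 0)]
      nlinarith [Real.sqrt_pos.mpr h12, div_pos one_pos hs]
    exact ⟨this, this⟩
end

section
/- For the D2Q13 model with transverse wave and V perpendicular to k, the third-order phase velocity v_φ = [σ_4(89772σ_6 + 30888σ_8) - 10055]/157080 · V·sin(4θ) vanishes for all θ and V if and only if σ_4(89772σ_6 + 30888σ_8) = 10055; in particular, if σ_6 = σ_8 = 1/(12σ_4) then σ_4(89772σ_6 + 30888σ_8) = 120660/12 = 10055, so the correction vanishes identically. -/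
/-- For the D2Q13 model (transverse wave, `V ⊥ k`), the third-order phase
velocity `v_φ = [σ₄(89772 σ₆ + 30888 σ₈) - 10055]/157080 · V sin 4θ` vanishes
for all `θ` and `V` iff `σ₄(89772 σ₆ + 30888 σ₈) = 10055`; in particular, if
`σ₆ = σ₈ = 1/(12σ₄)` then `σ₄(89772 σ₆ + 30888 σ₈) = 120660/12 = 10055`, so the
correction vanishes identically. -/
theorem d2q13_transverse_phase_velocity (σ4 σ6 σ8 : ℝ) (hσ4 : 0 < σ4) :
    ((∀ θ V : ℝ,
        (σ4 * (89772 * σ6 + 30888 * σ8) - 10055) / 157080 * V * Real.sin (4 * θ) = 0)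
      ↔ σ4 * (89772 * σ6 + 30888 * σ8) = 10055) ∧
    (σ6 = 1 / (12 * σ4) → σ8 = 1 / (12 * σ4) →
      σ4 * (89772 * σ6 + 30888 * σ8) = 120660 / 12 ∧
      (120660 : ℝ) / 12 = 10055) := by
  constructor
  · constructor
    · intro h
      have h1 := h (Real.pi / 8) 1
      rw [show 4 * (Real.pi / 8) = Real.pi / 2 by ring, Real.sin_pi_div_two] at h1
      have : σ4 * (89772 * σ6 + 30888 * σ8) - 10055 = 0 := by
        field_simp at h1
        linarith
      linarith
    · intro h θ V
      rw [h]
      ring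
  · intro h6 h8
    subst h6 h8
    have hne : σ4 ≠ 0 := ne_of_gt hσ4
    constructor
    · field_simp
      ring
    · norm_num
end
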